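/- arXiv:2410.24130 — 2 statements merged into one kernel-verified Lean document; each statement's English description precedes it below -/
import Mathlib

section
/- Upper bound for products with theta graphs: for integers r > 1 and k ≥ ℓ ≥ 4 and any graph G, m_e(G□H_{k,ℓ}, r) ≤ m_e(G,r) + (k+ℓ−5)·m_e(G,r−1) + 2·m_e(G,r−2) + d^G_{r−1} + (k+ℓ−3)·d^G_{r−2} + (k+ℓ−1)·Σ_{t=0}^{r−3} d^G_t. -/
/-!
View `G □ H_{k,ℓ}` as layers `G × {h}` joined by fibres `{v} × H_{k,ℓ}`; let `a`, `b` be the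
hubs. Seed an `r`-percolating set of `G` in layer `a`, an `(r-1)`-percolating one in layer `b`
and in every inner layer of the two long `a`–`b` paths except the last, and an
`(r-2)`-percolating one in the two last inner layers. In the fibre of a vertex of degree `r - 1`
seed the edge `ab`, of degree `r - 2` all `k + ℓ - 3` edges but the first and the last of the
`ℓ`-path, and of smaller degree all `k + ℓ - 1` edges. Counting this seed gives the bound.

A layer seeded with an `(r-s)`-percolating set is infected as soon as every vertex of degree at
least `r - s` has `s` infected fibre edges there: each step of the infection in `G` is replayed
in the layer. Once a layer is infected, a vertex of degree `d` has `d` infected layer edges, so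
its fibre edges there follow from `r - d` infected ones. Hence the infection spreads from layer
`a` to layer `b`, then along both paths, and the two last layers get their two extra fibre edges
from both of their neighbours.
-/


open Polynomial

namespace BondPerc

open Classical

set_option maxHeartbeats 1000000

/-- The set of edges eventually infected in `r`-bond bootstrap percolation on `G`
starting from the initially infected set `S`. -/
inductive Infected {V : Type*} (G : SimpleGraph V) (r : ℕ) (S : Set (Sym2 V)) : Sym2 V → Prop
  | init {e : Sym2 V} (he : e ∈ S) : Infected G r S e
  | step {e : Sym2 V} (he : e ∈ G.edgeSet) (v : V) (hv : v ∈ e)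
      (T : Finset (Sym2 V)) (hT : r ≤ T.card)
      (hT1 : ∀ f ∈ T, f ∈ G.edgeSet) (hT2 : ∀ f ∈ T, v ∈ f)
      (hT3 : ∀ f ∈ T, Infected G r S f) : Infected G r S e

/-- `S` percolates in `r`-bond bootstrap percolation on `G`. -/
def Percolates {V : Type*} (G : SimpleGraph V) (r : ℕ) (S : Set (Sym2 V)) : Prop :=
  S ⊆ G.edgeSet ∧ ∀ e ∈ G.edgeSet, Infected G r S e

/-- `m_e(G,r)`: the minimum size of an `r`-percolating set of edges of `G`. -/
noncomputable def me {V : Type*} (G : SimpleGraph V) (r : ℕ) : ℕ :=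
  sInf {n | ∃ S : Set (Sym2 V), S.Finite ∧ Percolates G r S ∧ S.ncard = n}

/-- `c` is a proper edge-colouring of `G`: edges sharing a vertex get distinct colours. -/
def IsProperEdgeColoring {V : Type*} (G : SimpleGraph V) (c : Sym2 V → ℝ) : Prop :=
  ∀ e ∈ G.edgeSet, ∀ f ∈ G.edgeSet, e ≠ f → (∃ v, v ∈ e ∧ v ∈ f) → c e ≠ c f

set_option maxHeartbeats 1000000 in
/-- The vector space `W^r_{G,c}` of tuples of polynomials `(p_v)` with
`deg p_v ≤ min(r, deg v) - 1` and `p_u(c(uv)) = p_v(c(uv))` for every edge `uv`. -/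
noncomputable def Wspace {V : Type*} [Fintype V] (G : SimpleGraph V) (r : ℕ)
    (c : Sym2 V → ℝ) : Submodule ℝ (V → Polynomial ℝ) where
  carrier := {p | (∀ v, (p v).degree < (min r (G.degree v) : ℕ)) ∧
    ∀ u v, G.Adj u v → (p u).eval (c s(u, v)) = (p v).eval (c s(u, v))}
  add_mem' := by
    rintro p q ⟨hp1, hp2⟩ ⟨hq1, hq2⟩
    refine ⟨fun v => lt_of_le_of_lt (degree_add_le _ _) (max_lt (hp1 v) (hq1 v)), ?_⟩
    intro u v huv
    simp only [Pi.add_apply, eval_add, hp2 u v huv, hq2 u v huv]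
  zero_mem' := by
    refine ⟨fun v => ?_, fun u v h => by simp⟩
    simp only [Pi.zero_apply, degree_zero]
    exact WithBot.bot_lt_coe _
  smul_mem' := by
    rintro a p ⟨hp1, hp2⟩
    refine ⟨fun v => lt_of_le_of_lt (degree_smul_le a (p v)) (hp1 v), ?_⟩
    intro u v huv
    simp only [Pi.smul_apply, Polynomial.eval_smul, hp2 u v huv]

/-- `dim W^r_{G,c}`. -/
noncomputable def Wdim {V : Type*} [Fintype V] (G : SimpleGraph V) (r : ℕ)
    (c : Sym2 V → ℝ) : ℕ :=
  Module.finrank ℝ (Wspace G r c)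

/-- `d^G_i`, the number of vertices of `G` of degree `i` (indexed by `ℤ`, zero for `i < 0`). -/
noncomputable def dcount {V : Type*} [Fintype V] (G : SimpleGraph V) (i : ℤ) : ℕ :=
  Nat.card {v : V // (G.degree v : ℤ) = i}

/-- The star `S_k` with centre `0` and `k` leaves. -/
def starGraph (k : ℕ) : SimpleGraph (Fin (k + 1)) :=
  SimpleGraph.fromRel fun i _ => i = 0

/-- The theta graph `H_{k,ℓ}`: two hub vertices joined by three internally disjoint
paths of lengths `1`, `ℓ - 1` and `k - 1`. -/
def thetaGraph (k l : ℕ) : SimpleGraph (Fin 2 ⊕ Fin (l - 2) ⊕ Fin (k - 2)) :=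
  SimpleGraph.fromRel fun x y =>
    (x = Sum.inl 0 ∧ y = Sum.inl 1) ∨
    (x = Sum.inl 0 ∧ ∃ j : Fin (l - 2), y = Sum.inr (Sum.inl j) ∧ j.val = 0) ∨
    (∃ i j : Fin (l - 2), x = Sum.inr (Sum.inl i) ∧ y = Sum.inr (Sum.inl j) ∧
      j.val = i.val + 1) ∨
    (∃ i : Fin (l - 2), x = Sum.inr (Sum.inl i) ∧ i.val = l - 3 ∧ y = Sum.inl 1) ∨
    (x = Sum.inl 0 ∧ ∃ j : Fin (k - 2), y = Sum.inr (Sum.inr j) ∧ j.val = 0) ∨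
    (∃ i j : Fin (k - 2), x = Sum.inr (Sum.inr i) ∧ y = Sum.inr (Sum.inr j) ∧
      j.val = i.val + 1) ∨
    (∃ i : Fin (k - 2), x = Sum.inr (Sum.inr i) ∧ i.val = k - 3 ∧ y = Sum.inl 1)

open Finset

section Simulation

variable {V W : Type*} [Fintype V] {G : SimpleGraph V} {P : SimpleGraph W}

theorem Infected.of_neighbors {r : ℕ} {T : Set (Sym2 W)} {x y : W} (hxy : P.Adj x y)
    (X : Finset W) (hX : r ≤ #X) (hXadj : ∀ z ∈ X, P.Adj x z)
    (hXinf : ∀ z ∈ X, Infected P r T s(x, z)) : Infected P r T s(x, y) := by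
  refine .step hxy x (Sym2.mem_mk_left x y) (X.image (s(x, ·))) ?_ ?_ ?_ ?_
  · rwa [card_image_of_injective _ fun _ _ => Sym2.congr_right.1]
  all_goals
    simp only [mem_image]
    rintro _ ⟨z, hz, rfl⟩
  · exact hXadj z hz
  · exact Sym2.mem_mk_left x z
  · exact hXinf z hz

theorem Infected.map (φ : G ↪g P) {r r' : ℕ} {S : Set (Sym2 V)} {T : Set (Sym2 W)}
    (hS : ∀ e ∈ S, Infected P r T (e.map φ))
    (hextra : ∀ v, r' ≤ G.degree v → ∃ C : Finset (Sym2 W), r - r' ≤ #C ∧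
      ∀ f ∈ C, f ∈ P.edgeSet ∧ φ v ∈ f ∧ f ∉ Set.range (Sym2.map φ) ∧
        Infected P r T f)
    {e : Sym2 V} (he : Infected G r' S e) : Infected P r T (e.map φ) := by
  induction he with
  | init h => exact hS _ h
  | step heG v hv TG hTG hTG_edge hTG_mem _ ih =>
    have hdeg : #TG ≤ G.degree v := by
      rw [← G.card_incidenceFinset_eq_degree]
      exact card_le_card fun f hf => (G.mem_incidenceFinset v f).2 ⟨hTG_edge f hf, hTG_mem f hf⟩
    obtain ⟨C, hC, hCprop⟩ := hextra v (hTG.trans hdeg)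
    have hdisj : Disjoint (TG.image (Sym2.map φ)) C := by
      refine disjoint_left.2 fun f hf hfC => (hCprop f hfC).2.2.1 ?_
      obtain ⟨g, -, rfl⟩ := mem_image.1 hf
      exact ⟨g, rfl⟩
    refine .step (φ.toHom.map_mem_edgeSet heG) (φ v) (Sym2.mem_map.2 ⟨v, hv, rfl⟩)
      (TG.image (Sym2.map φ) ∪ C) ?_ ?_ ?_ ?_
    · rw [card_union_of_disjoint hdisj,
        card_image_of_injective _ (Sym2.map.injective φ.injective)]
      omega
    all_goals
      simp only [mem_union, mem_image]
      rintro f (⟨g, hg, rfl⟩ | hf)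
    · exact φ.toHom.map_mem_edgeSet (hTG_edge g hg)
    · exact (hCprop f hf).1
    · exact Sym2.mem_map.2 ⟨v, hTG_mem g hg, rfl⟩
    · exact (hCprop f hf).2.1
    · exact ih g hg
    · exact (hCprop f hf).2.2.2

end Simulation

section Product

variable {V VH : Type*} (G : SimpleGraph V) (H : SimpleGraph VH) (r : ℕ)
  (T : Set (Sym2 (V × VH)))

def LayerInfected (h : VH) : Prop :=
  ∀ e ∈ G.edgeSet, Infected (G □ H) r T (e.map (·, h))

variable {G H r T} in
theorem forall_infected_of_layers_of_fibres (hL : ∀ h, LayerInfected G H r T h)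
    (hF : ∀ v, ∀ e ∈ H.edgeSet, Infected (G □ H) r T (e.map (Prod.mk v))) :
    ∀ e ∈ (G □ H).edgeSet, Infected (G □ H) r T e := by
  refine Sym2.ind fun ⟨u, h⟩ ⟨u', h'⟩ he => ?_
  rcases SimpleGraph.boxProd_adj.1 he with ⟨hG, rfl : h = h'⟩ | ⟨hH, rfl : u = u'⟩
  · exact hL h s(u, u') hG
  · exact hF u s(h, h') hH

variable [Fintype V]

def CrossInfected (s : ℕ) (h h' : VH) : Prop :=
  ∀ v, r ≤ G.degree v + s → Infected (G □ H) r T s((v, h), (v, h'))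

def AllCrossInfected (s : ℕ) (h : VH) : Prop :=
  ∀ h', H.Adj h h' → CrossInfected G H r T s h h'

variable {G H r T}

theorem CrossInfected.symm {s : ℕ} {h h' : VH} (hc : CrossInfected G H r T s h h') :
    CrossInfected G H r T s h' h := fun v hv => Sym2.eq_swap ▸ hc v hv

theorem AllCrossInfected.mono {s s' : ℕ} {h : VH} (hc : AllCrossInfected G H r T s' h)
    (hss : s ≤ s') : AllCrossInfected G H r T s h :=
  fun h' hadj v hv => hc h' hadj v (by omega)

theorem LayerInfected.infected_cross {h : VH} (hL : LayerInfected G H r T h) {v : V} {F : Finset VH}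
    (hF : ∀ h' ∈ F, H.Adj h h' ∧ Infected (G □ H) r T s((v, h), (v, h')))
    (hcard : r ≤ G.degree v + #F) {h' : VH} (hadj : H.Adj h h') :
    Infected (G □ H) r T s((v, h), (v, h')) := by
  refine .of_neighbors (SimpleGraph.boxProd_adj_right.2 hadj)
    ((G.neighborFinset v).image (·, h) ∪ F.image (v, ·)) ?_ ?_ ?_
  · have hdisj : Disjoint ((G.neighborFinset v).image (·, h)) (F.image (v, ·)) := by
      simp only [disjoint_left, mem_image, SimpleGraph.mem_neighborFinset, not_exists, not_and]
      rintro _ ⟨u, hu, rfl⟩ h' - hh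
      exact hu.ne (congrArg Prod.fst hh)
    rwa [card_union_of_disjoint hdisj, card_image_of_injective _ (Prod.mk_left_injective h),
      card_image_of_injective _ (Prod.mk_right_injective v), G.card_neighborFinset_eq_degree]
  all_goals
    simp only [mem_union, mem_image, SimpleGraph.mem_neighborFinset]
    rintro _ (⟨u, hu, rfl⟩ | ⟨h', hh', rfl⟩)
  · exact SimpleGraph.boxProd_adj_left.2 hu
  · exact SimpleGraph.boxProd_adj_right.2 (hF h' hh').1
  · exact hL s(v, u) hu
  · exact (hF h' hh').2

theorem LayerInfected.allCrossInfected {s : ℕ} {h : VH} (hL : LayerInfected G H r T h)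
    {F : Finset VH} (hsF : s ≤ #F)
    (hF : ∀ h' ∈ F, H.Adj h h' ∧ CrossInfected G H r T s h h') :
    AllCrossInfected G H r T s h :=
  fun _ hadj v hv =>
    hL.infected_cross (fun h' hh' => ⟨(hF h' hh').1, (hF h' hh').2 v hv⟩) (by omega) hadj

theorem layerInfected_of_percolates {s : ℕ} {A : Set (Sym2 V)} {h : VH}
    (hA : Percolates G (r - s) A) (hAT : ∀ e ∈ A, Infected (G □ H) r T (e.map (·, h)))
    {F : Finset VH} (hsF : s ≤ #F)
    (hF : ∀ h' ∈ F, H.Adj h h' ∧ CrossInfected G H r T s h h') :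
    LayerInfected G H r T h := by
  refine fun e he => Infected.map (G.boxProdLeft H h) hAT (fun v hv => ?_) (hA.2 e he)
  refine ⟨F.image fun h' => s((v, h), (v, h')), ?_, ?_⟩
  · rw [card_image_of_injective _ fun _ _ hh => congrArg Prod.snd (Sym2.congr_right.1 hh)]
    omega
  simp only [mem_image]
  rintro _ ⟨h', hh', rfl⟩
  refine ⟨SimpleGraph.boxProd_adj_right.2 (hF h' hh').1, Sym2.mem_mk_left _ _, ?_,
    (hF h' hh').2 v (by omega)⟩
  rintro ⟨g, hg⟩
  have : (v, h') ∈ g.map (G.boxProdLeft H h) := hg ▸ Sym2.mem_mk_right _ _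
  obtain ⟨u, -, hu⟩ := Sym2.mem_map.1 this
  exact (hF h' hh').1.ne (congrArg Prod.snd hu)

end Product

section Paths

variable {V VH : Type*} [Fintype V] {G : SimpleGraph V} {H : SimpleGraph VH} {r : ℕ}
  {T : Set (Sym2 (V × VH))} {p : ℕ → VH}

theorem chain_layers_infected {n : ℕ} (hp : ∀ j < n, H.Adj (p j) (p (j + 1)))
    {A : Set (Sym2 V)} (hA : Percolates G (r - 1) A)
    (hAT : ∀ j, 0 < j → j ≤ n → ∀ e ∈ A, Infected (G □ H) r T (e.map (·, p j)))
    (h0 : AllCrossInfected G H r T 1 (p 0)) :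
    ∀ j ≤ n, AllCrossInfected G H r T 1 (p j) ∧ (0 < j → LayerInfected G H r T (p j))
  | 0, _ => ⟨h0, by omega⟩
  | j + 1, hj => by
    have hadj := hp j (by omega)
    have hF : ∀ h' ∈ ({p j} : Finset VH), H.Adj (p (j + 1)) h' ∧
        CrossInfected G H r T 1 (p (j + 1)) h' := by
      simpa using ⟨hadj.symm, ((chain_layers_infected hp hA hAT h0 j (by omega)).1 _ hadj).symm⟩
    have hL := layerInfected_of_percolates hA (hAT (j + 1) (by omega) hj) (by simp) hF
    exact ⟨hL.allCrossInfected (by simp) hF, fun _ => hL⟩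

theorem path_layers_infected {m : ℕ} (hm : 2 ≤ m) (hp : ∀ j < m, H.Adj (p j) (p (j + 1)))
    (hne : p (m - 2) ≠ p m) {A₁ A₂ : Set (Sym2 V)}
    (h₁ : Percolates G (r - 1) A₁) (h₂ : Percolates G (r - 2) A₂)
    (hA₁ : ∀ j, 0 < j → j + 2 ≤ m →
      ∀ e ∈ A₁, Infected (G □ H) r T (e.map (·, p j)))
    (hA₂ : ∀ e ∈ A₂, Infected (G □ H) r T (e.map (·, p (m - 1))))
    (hstart : AllCrossInfected G H r T 1 (p 0)) (hend : AllCrossInfected G H r T 2 (p m))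
    (hlast : ∀ v, G.degree v + 2 = r →
      Infected (G □ H) r T s((v, p (m - 2)), (v, p (m - 1)))) :
    ∀ j, 0 < j → j < m →
      LayerInfected G H r T (p j) ∧ AllCrossInfected G H r T 1 (p j) := by
  have hchain := chain_layers_infected (n := m - 2) (fun j hj => hp j (by omega)) h₁
    (fun j hj hjn => hA₁ j hj (by omega)) hstart
  have hadj₁ : H.Adj (p (m - 2)) (p (m - 1)) := by
    simpa [show m - 2 + 1 = m - 1 by omega] using hp (m - 2) (by omega)
  have hadj₂ : H.Adj (p (m - 1)) (p m) := by
    simpa [show m - 1 + 1 = m by omega] using hp (m - 1) (by omega)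
  have hF : ∀ h' ∈ ({p (m - 2), p m} : Finset VH), H.Adj (p (m - 1)) h' ∧
      CrossInfected G H r T 2 (p (m - 1)) h' := by
    simp only [mem_insert, mem_singleton]
    rintro _ (rfl | rfl)
    · refine ⟨hadj₁.symm, CrossInfected.symm fun v hv => ?_⟩
      by_cases hv₁ : r ≤ G.degree v + 1
      · exact (hchain (m - 2) le_rfl).1 _ hadj₁ v hv₁
      · exact hlast v (by omega)
    · exact ⟨hadj₂, (hend _ hadj₂.symm).symm⟩
  have hcard : 2 ≤ #({p (m - 2), p m} : Finset VH) := (card_pair hne).ge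
  have hL := layerInfected_of_percolates h₂ hA₂ hcard hF
  intro j hj hjm
  by_cases hjl : j = m - 1
  · subst hjl
    exact ⟨hL, (hL.allCrossInfected hcard hF).mono (by omega)⟩
  · obtain ⟨hc, hl⟩ := hchain j (by omega)
    exact ⟨hl hj, hc⟩

end Paths

section PathVertex

variable {α : Type*} (a b : α) {n : ℕ} (ι : Fin n → α)

/-- The vertices `a = x₀, x₁, …, xₙ₊₁ = b` of the path `a, ι 0, …, ι (n - 1), b`. -/
def pathVertex (j : ℕ) : α :=
  if j = 0 then a else if h : j - 1 < n then ι ⟨j - 1, h⟩ else b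

@[simp] theorem pathVertex_zero : pathVertex a b ι 0 = a := if_pos rfl

theorem pathVertex_succ (i : Fin n) : pathVertex a b ι (i + 1) = ι i := by
  simp [pathVertex]

theorem pathVertex_of_pos {j : ℕ} (hj : 0 < j) (hjn : j ≤ n) :
    pathVertex a b ι j = ι ⟨j - 1, by omega⟩ := by
  simpa [show j - 1 + 1 = j by omega] using pathVertex_succ a b ι ⟨j - 1, by omega⟩

theorem pathVertex_add_one : pathVertex a b ι (n + 1) = b := by
  simp [pathVertex]

variable {a b ι}

theorem pathVertex_rel {R : α → α → Prop} (hn : 0 < n) (hfirst : R a (ι ⟨0, hn⟩))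
    (hstep : ∀ i (hi : i + 1 < n), R (ι ⟨i, by omega⟩) (ι ⟨i + 1, hi⟩))
    (hlast : R (ι ⟨n - 1, by omega⟩) b) :
    ∀ j ≤ n, R (pathVertex a b ι j) (pathVertex a b ι (j + 1)) := by
  rintro (_ | j) hj
  · simpa [pathVertex_of_pos a b ι zero_lt_one hn] using hfirst
  · rw [pathVertex_of_pos a b ι (Nat.succ_pos j) hj]
    rcases Nat.lt_or_eq_of_le hj with hj | rfl
    · simpa [pathVertex_of_pos a b ι (Nat.succ_pos (j + 1)) hj] using hstep j hj
    · simpa [pathVertex_add_one] using hlast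

end PathVertex

section Theta

variable {k l : ℕ}

/-- `thetaP k l` and `thetaQ k l` run along the paths of length `ℓ - 1` and `k - 1` of `H_{k,ℓ}`
from the hub `Sum.inl 0` to the hub `Sum.inl 1`. -/
def thetaP (k l : ℕ) : ℕ → Fin 2 ⊕ Fin (l - 2) ⊕ Fin (k - 2) :=
  pathVertex (Sum.inl 0) (Sum.inl 1) fun i => Sum.inr (Sum.inl i)

def thetaQ (k l : ℕ) : ℕ → Fin 2 ⊕ Fin (l - 2) ⊕ Fin (k - 2) :=
  pathVertex (Sum.inl 0) (Sum.inl 1) fun i => Sum.inr (Sum.inr i)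

theorem thetaGraph_adj_hubs : (thetaGraph k l).Adj (Sum.inl 0) (Sum.inl 1) := by
  simp [thetaGraph]

theorem thetaP_adj (hl : 3 ≤ l) :
    ∀ j < l - 1, (thetaGraph k l).Adj (thetaP k l j) (thetaP k l (j + 1)) := by
  intro j hj
  refine pathVertex_rel (R := (thetaGraph k l).Adj) (by omega) ?_ ?_ ?_ j (by omega)
  all_goals simp [thetaGraph]
  omega

theorem thetaQ_adj (hk : 3 ≤ k) :
    ∀ j < k - 1, (thetaGraph k l).Adj (thetaQ k l j) (thetaQ k l (j + 1)) := by
  intro j hj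
  refine pathVertex_rel (R := (thetaGraph k l).Adj) (by omega) ?_ ?_ ?_ j (by omega)
  all_goals simp [thetaGraph]
  omega

@[simp] theorem thetaP_zero : thetaP k l 0 = Sum.inl 0 := pathVertex_zero _ _ _

@[simp] theorem thetaQ_zero : thetaQ k l 0 = Sum.inl 0 := pathVertex_zero _ _ _

theorem thetaP_succ (i : Fin (l - 2)) : thetaP k l (i + 1) = Sum.inr (Sum.inl i) :=
  pathVertex_succ _ _ _ i

theorem thetaQ_succ (i : Fin (k - 2)) : thetaQ k l (i + 1) = Sum.inr (Sum.inr i) :=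
  pathVertex_succ _ _ _ i

theorem thetaP_last (hl : 2 ≤ l) : thetaP k l (l - 1) = Sum.inl 1 := by
  unfold thetaP
  simpa [show l - 2 + 1 = l - 1 by omega] using pathVertex_add_one (n := l - 2) _ _ _

theorem thetaQ_last (hk : 2 ≤ k) : thetaQ k l (k - 1) = Sum.inl 1 := by
  unfold thetaQ
  simpa [show k - 2 + 1 = k - 1 by omega] using pathVertex_add_one (n := k - 2) _ _ _

theorem thetaP_ne_inl {j : ℕ} (hj₀ : 0 < j) (hj : j ≤ l - 2) (i : Fin 2) :
    thetaP k l j ≠ Sum.inl i := by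
  simp [thetaP, pathVertex_of_pos _ _ _ hj₀ hj]

theorem thetaQ_ne_inl {j : ℕ} (hj₀ : 0 < j) (hj : j ≤ k - 2) (i : Fin 2) :
    thetaQ k l j ≠ Sum.inl i := by
  simp [thetaQ, pathVertex_of_pos _ _ _ hj₀ hj]

def pathEdges {α : Type*} [DecidableEq α] (p : ℕ → α) (I : Finset ℕ) : Finset (Sym2 α) :=
  I.image fun i => s(p i, p (i + 1))

def thetaEdges (k l : ℕ) (I : Finset ℕ) :
    Finset (Sym2 (Fin 2 ⊕ Fin (l - 2) ⊕ Fin (k - 2))) :=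
  insert s(Sum.inl 0, Sum.inl 1)
    (pathEdges (thetaP k l) I ∪ pathEdges (thetaQ k l) (range (k - 1)))

theorem hubs_mem_thetaEdges (I : Finset ℕ) : s(Sum.inl 0, Sum.inl 1) ∈ thetaEdges k l I :=
  mem_insert_self _ _

theorem thetaP_mem_thetaEdges {I : Finset ℕ} {i : ℕ} (hi : i ∈ I) :
    s(thetaP k l i, thetaP k l (i + 1)) ∈ thetaEdges k l I :=
  mem_insert_of_mem (mem_union_left _ (mem_image_of_mem _ hi))

theorem thetaQ_mem_thetaEdges (I : Finset ℕ) {i : ℕ} (hi : i < k - 1) :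
    s(thetaQ k l i, thetaQ k l (i + 1)) ∈ thetaEdges k l I :=
  mem_insert_of_mem (mem_union_right _ (mem_image_of_mem _ (mem_range.2 hi)))

theorem thetaEdges_subset_edgeSet (hl : 3 ≤ l) (hk : 3 ≤ k) {I : Finset ℕ}
    (hI : ∀ i ∈ I, i < l - 1) : ↑(thetaEdges k l I) ⊆ (thetaGraph k l).edgeSet := by
  simp only [thetaEdges, pathEdges, coe_insert, coe_union, coe_image, Set.insert_subset_iff,
    Set.union_subset_iff, Set.image_subset_iff]
  exact ⟨thetaGraph_adj_hubs, fun i hi => thetaP_adj hl i (hI i hi),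
    fun i hi => thetaQ_adj hk i (mem_range.1 hi)⟩

theorem edgeSet_subset_thetaEdges (hl : 3 ≤ l) (hk : 3 ≤ k) :
    (thetaGraph k l).edgeSet ⊆ ↑(thetaEdges k l (range (l - 1))) := by
  refine Sym2.ind fun x y h => ?_
  rw [SimpleGraph.mem_edgeSet, thetaGraph, SimpleGraph.fromRel_adj] at h
  obtain ⟨-, h | h⟩ := h
  on_goal 2 => rw [Sym2.eq_swap]
  all_goals
    rcases h with ⟨rfl, rfl⟩ | ⟨rfl, j, rfl, hj⟩ | ⟨i, j, rfl, rfl, hij⟩ |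
      ⟨i, rfl, hi, rfl⟩ | ⟨rfl, j, rfl, hj⟩ | ⟨i, j, rfl, rfl, hij⟩ |
      ⟨i, rfl, hi, rfl⟩
  all_goals first
    | exact hubs_mem_thetaEdges _
    | (rw [← thetaP_zero (k := k), ← thetaP_succ j, hj]
       exact thetaP_mem_thetaEdges (mem_range.2 (by omega)))
    | (rw [← thetaP_succ i, ← thetaP_succ j, hij]
       exact thetaP_mem_thetaEdges (mem_range.2 (by omega)))
    | (rw [← thetaP_succ i, hi, ← thetaP_last (k := k) (by omega),
         show l - 1 = l - 3 + 1 + 1 by omega]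
       exact thetaP_mem_thetaEdges (mem_range.2 (by omega)))
    | (rw [← thetaQ_zero (l := l), ← thetaQ_succ j, hj]
       exact thetaQ_mem_thetaEdges _ (by omega))
    | (rw [← thetaQ_succ i, ← thetaQ_succ j, hij]
       exact thetaQ_mem_thetaEdges _ (by omega))
    | (rw [← thetaQ_succ i, hi, ← thetaQ_last (l := l) (by omega),
         show k - 1 = k - 3 + 1 + 1 by omega]
       exact thetaQ_mem_thetaEdges _ (by omega))

theorem coe_thetaEdges_range (hl : 3 ≤ l) (hk : 3 ≤ k) :
    ↑(thetaEdges k l (range (l - 1))) = (thetaGraph k l).edgeSet :=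
  (thetaEdges_subset_edgeSet hl hk fun _ => mem_range.1).antisymm (edgeSet_subset_thetaEdges hl hk)

theorem mem_thetaEdges_range {e : Sym2 (Fin 2 ⊕ Fin (l - 2) ⊕ Fin (k - 2))}
    (he : e ∈ thetaEdges k l (range (l - 1))) :
    e ∈ thetaEdges k l (Ico 1 (l - 2)) ∨ e = s(thetaP k l 0, thetaP k l 1) ∨
      e = s(thetaP k l (l - 2), thetaP k l (l - 1)) := by
  simp only [thetaEdges, pathEdges, mem_insert, mem_union, mem_image, mem_range, mem_Ico] at he ⊢
  rcases he with he | ⟨i, hi, rfl⟩ | he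
  · exact .inl (.inl he)
  · rcases (by omega : i = 0 ∨ (1 ≤ i ∧ i < l - 2) ∨ i = l - 2) with rfl | hi | rfl
    · exact .inr (.inl rfl)
    · exact .inl (.inr (.inl ⟨i, hi, rfl⟩))
    · exact .inr (.inr (by rw [show l - 2 + 1 = l - 1 by omega]))
  · exact .inl (.inr (.inr he))

theorem card_thetaEdges_le (I : Finset ℕ) : #(thetaEdges k l I) ≤ 1 + #I + (k - 1) := by
  unfold thetaEdges pathEdges
  grw [card_insert_le, card_union_le, card_image_le, card_image_le, card_range]
  omega

end Theta

section Seed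

variable {V : Type*} [Fintype V] (k l : ℕ) (G : SimpleGraph V) (r : ℕ)
  (A₀ A₁ A₂ : Finset (Sym2 V))

noncomputable def thetaSeed : Finset (Sym2 (V × (Fin 2 ⊕ Fin (l - 2) ⊕ Fin (k - 2)))) :=
  A₀.image (Sym2.map (·, Sum.inl 0)) ∪
  (insert (Sum.inl 1) ((Ico 1 (l - 2)).image (thetaP k l) ∪ (Ico 1 (k - 2)).image (thetaQ k l))
    ).biUnion (fun h => A₁.image (Sym2.map (·, h))) ∪
  ({thetaP k l (l - 2), thetaQ k l (k - 2)} : Finset _).biUnion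
    (fun h => A₂.image (Sym2.map (·, h))) ∪
  ({v | G.degree v + 1 = r} : Finset V).image (fun v => s((v, Sum.inl 0), (v, Sum.inl 1))) ∪
  ({v | G.degree v + 2 = r} : Finset V).biUnion
    (fun v => (thetaEdges k l (Ico 1 (l - 2))).image (Sym2.map (Prod.mk v))) ∪
  ({v | G.degree v + 3 ≤ r} : Finset V).biUnion
    (fun v => (thetaEdges k l (range (l - 1))).image (Sym2.map (Prod.mk v)))

variable {k l G r A₀ A₁ A₂}

theorem layer₀_mem_thetaSeed {e : Sym2 V} (he : e ∈ A₀) :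
    e.map (·, Sum.inl 0) ∈ thetaSeed k l G r A₀ A₁ A₂ := by
  simp only [thetaSeed, mem_union, mem_image_of_mem _ he, true_or]

theorem layer₁_mem_thetaSeed {h : Fin 2 ⊕ Fin (l - 2) ⊕ Fin (k - 2)}
    (hh : h = Sum.inl 1 ∨ (∃ j ∈ Ico 1 (l - 2), thetaP k l j = h) ∨
      ∃ j ∈ Ico 1 (k - 2), thetaQ k l j = h)
    {e : Sym2 V} (he : e ∈ A₁) : e.map (·, h) ∈ thetaSeed k l G r A₀ A₁ A₂ := by
  have : e.map (·, h) ∈ (insert (Sum.inl 1) ((Ico 1 (l - 2)).image (thetaP k l) ∪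
      (Ico 1 (k - 2)).image (thetaQ k l))).biUnion (fun h => A₁.image (Sym2.map (·, h))) :=
    mem_biUnion.2 ⟨h, by simpa [or_assoc] using hh, mem_image_of_mem _ he⟩
  simp only [thetaSeed, mem_union, this, true_or, or_true]

theorem layer₂_mem_thetaSeed {h : Fin 2 ⊕ Fin (l - 2) ⊕ Fin (k - 2)}
    (hh : h = thetaP k l (l - 2) ∨ h = thetaQ k l (k - 2))
    {e : Sym2 V} (he : e ∈ A₂) : e.map (·, h) ∈ thetaSeed k l G r A₀ A₁ A₂ := by
  have : e.map (·, h) ∈ ({thetaP k l (l - 2), thetaQ k l (k - 2)} : Finset _).biUnion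
      (fun h => A₂.image (Sym2.map (·, h))) :=
    mem_biUnion.2 ⟨h, by simpa using hh, mem_image_of_mem _ he⟩
  simp only [thetaSeed, mem_union, this, true_or, or_true]

theorem hubs_mem_thetaSeed {v : V} (hv : G.degree v + 1 = r) :
    s((v, Sum.inl 0), (v, Sum.inl 1)) ∈ thetaSeed k l G r A₀ A₁ A₂ := by
  have : s((v, (Sum.inl 0 : Fin 2 ⊕ Fin (l - 2) ⊕ Fin (k - 2))), (v, Sum.inl 1)) ∈
      ({v | G.degree v + 1 = r} : Finset V).image
      (fun v => s((v, Sum.inl 0), (v, Sum.inl 1))) := mem_image_of_mem _ (by simpa using hv)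
  simp only [thetaSeed, mem_union, this, true_or, or_true]

theorem fibre₂_mem_thetaSeed {v : V} (hv : G.degree v + 2 = r) {e : Sym2 _}
    (he : e ∈ thetaEdges k l (Ico 1 (l - 2))) :
    e.map (Prod.mk v) ∈ thetaSeed k l G r A₀ A₁ A₂ := by
  have : e.map (Prod.mk v) ∈ ({v | G.degree v + 2 = r} : Finset V).biUnion
      (fun v => (thetaEdges k l (Ico 1 (l - 2))).image (Sym2.map (Prod.mk v))) :=
    mem_biUnion.2 ⟨v, by simpa using hv, mem_image_of_mem _ he⟩
  simp only [thetaSeed, mem_union, this, true_or, or_true]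

theorem fibre₃_mem_thetaSeed {v : V} (hv : G.degree v + 3 ≤ r) {e : Sym2 _}
    (he : e ∈ thetaEdges k l (range (l - 1))) :
    e.map (Prod.mk v) ∈ thetaSeed k l G r A₀ A₁ A₂ := by
  have : e.map (Prod.mk v) ∈ ({v | G.degree v + 3 ≤ r} : Finset V).biUnion
      (fun v => (thetaEdges k l (range (l - 1))).image (Sym2.map (Prod.mk v))) :=
    mem_biUnion.2 ⟨v, by simpa using hv, mem_image_of_mem _ he⟩
  simp only [thetaSeed, mem_union, this, or_true]

theorem thetaSeed_subset_edgeSet (hl : 3 ≤ l) (hk : 3 ≤ k) (h₀ : ↑A₀ ⊆ G.edgeSet)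
    (h₁ : ↑A₁ ⊆ G.edgeSet) (h₂ : ↑A₂ ⊆ G.edgeSet) :
    ↑(thetaSeed k l G r A₀ A₁ A₂) ⊆ (G □ thetaGraph k l).edgeSet := by
  intro f hf
  simp only [thetaSeed, coe_union, Set.mem_union, mem_coe, mem_biUnion, mem_image] at hf
  rcases hf with ((((⟨e, he, rfl⟩ | ⟨h, -, e, he, rfl⟩) | ⟨h, -, e, he, rfl⟩) |
    ⟨v, -, rfl⟩) | ⟨v, -, e, he, rfl⟩) | ⟨v, -, e, he, rfl⟩
  · exact (G.boxProdLeft _ _).toHom.map_mem_edgeSet (h₀ he)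
  · exact (G.boxProdLeft _ h).toHom.map_mem_edgeSet (h₁ he)
  · exact (G.boxProdLeft _ h).toHom.map_mem_edgeSet (h₂ he)
  · exact SimpleGraph.boxProd_adj_right.2 thetaGraph_adj_hubs
  · exact (G.boxProdRight _ v).toHom.map_mem_edgeSet
      (thetaEdges_subset_edgeSet hl hk (fun i hi => by simp at hi; omega) he)
  · exact (G.boxProdRight _ v).toHom.map_mem_edgeSet
      (thetaEdges_subset_edgeSet hl hk (fun i hi => mem_range.1 hi) he)

end Seed

section SeedPercolates

variable {V : Type*} [Fintype V] {G : SimpleGraph V} {k l r : ℕ}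
  {A₀ A₁ A₂ : Finset (Sym2 V)}

theorem thetaSeed_layerInfected_hub₀ (h₀ : Percolates G r ↑A₀) :
    LayerInfected G (thetaGraph k l) r ↑(thetaSeed k l G r A₀ A₁ A₂) (Sum.inl 0) :=
  layerInfected_of_percolates (s := 0) (F := ∅) h₀
    (fun _ he => .init (layer₀_mem_thetaSeed he)) le_rfl (by simp)

theorem thetaSeed_allCrossInfected_hub₀ (hk : 3 ≤ k) (h₀ : Percolates G r ↑A₀) :
    AllCrossInfected G (thetaGraph k l) r ↑(thetaSeed k l G r A₀ A₁ A₂) 2 (Sum.inl 0) := by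
  intro h' hadj v hv
  have hL := thetaSeed_layerInfected_hub₀ (k := k) (l := l) (A₁ := A₁) (A₂ := A₂) h₀
  rcases (by omega : r ≤ G.degree v ∨ G.degree v + 1 = r ∨ G.degree v + 2 = r)
    with hv | hv | hv
  · exact hL.infected_cross (F := ∅) (by simp) (by simpa using hv) hadj
  · refine hL.infected_cross (F := {Sum.inl 1}) ?_ (by simp; omega) hadj
    simpa using ⟨thetaGraph_adj_hubs, .init (hubs_mem_thetaSeed hv)⟩
  · have hQ : (thetaGraph k l).Adj (Sum.inl 0) (thetaQ k l 1) := by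
      simpa using thetaQ_adj (l := l) hk 0 (by omega)
    refine hL.infected_cross (F := {Sum.inl 1, thetaQ k l 1}) ?_ ?_ hadj
    · simp only [mem_insert, mem_singleton]
      rintro _ (rfl | rfl)
      · exact ⟨thetaGraph_adj_hubs,
          .init (by simpa using fibre₂_mem_thetaSeed hv (hubs_mem_thetaEdges _))⟩
      · exact ⟨hQ, .init (by
          simpa using fibre₂_mem_thetaSeed hv (thetaQ_mem_thetaEdges _ (i := 0) (by omega)))⟩
    · rw [card_pair (thetaQ_ne_inl one_pos (by omega) 1).symm]
      omega

theorem thetaSeed_layerInfected_hub₁ (hk : 3 ≤ k) (h₀ : Percolates G r ↑A₀)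
    (h₁ : Percolates G (r - 1) ↑A₁) :
    LayerInfected G (thetaGraph k l) r ↑(thetaSeed k l G r A₀ A₁ A₂) (Sum.inl 1) := by
  refine layerInfected_of_percolates h₁ (fun _ he => .init (layer₁_mem_thetaSeed (.inl rfl) he))
    (F := {Sum.inl 0}) (by simp) ?_
  simpa using ⟨thetaGraph_adj_hubs.symm,
    ((thetaSeed_allCrossInfected_hub₀ hk h₀).mono one_le_two _ thetaGraph_adj_hubs).symm⟩

theorem thetaSeed_allCrossInfected_hub₁ (hk : 3 ≤ k) (h₀ : Percolates G r ↑A₀)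
    (h₁ : Percolates G (r - 1) ↑A₁) :
    AllCrossInfected G (thetaGraph k l) r ↑(thetaSeed k l G r A₀ A₁ A₂) 2 (Sum.inl 1) := by
  intro h' hadj v hv
  have hL := thetaSeed_layerInfected_hub₁ (l := l) (A₂ := A₂) hk h₀ h₁
  have hab := (thetaSeed_allCrossInfected_hub₀ (l := l) (A₁ := A₁) (A₂ := A₂) hk h₀ _
    thetaGraph_adj_hubs).symm v hv
  by_cases hv₁ : r ≤ G.degree v + 1
  · refine hL.infected_cross (F := {Sum.inl 0}) ?_ (by simpa using hv₁) hadj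
    simpa using ⟨thetaGraph_adj_hubs.symm, hab⟩
  · have hQ := thetaQ_adj (l := l) hk (k - 2) (by omega)
    have hQE := thetaQ_mem_thetaEdges (k := k) (l := l) (Ico 1 (l - 2)) (i := k - 2) (by omega)
    rw [show k - 2 + 1 = k - 1 by omega, thetaQ_last (by omega)] at hQ hQE
    refine hL.infected_cross (F := {Sum.inl 0, thetaQ k l (k - 2)}) ?_ ?_ hadj
    · simp only [mem_insert, mem_singleton]
      rintro _ (rfl | rfl)
      · exact ⟨thetaGraph_adj_hubs.symm, hab⟩
      · refine ⟨hQ.symm, .init ?_⟩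
        rw [Sym2.eq_swap]
        exact fibre₂_mem_thetaSeed (by omega) hQE
    · rw [card_pair (thetaQ_ne_inl (by omega) le_rfl 0).symm]
      omega

theorem thetaSeed_thetaP_layers_infected (hl : 4 ≤ l) (hkl : l ≤ k)
    (h₀ : Percolates G r ↑A₀)
    (h₁ : Percolates G (r - 1) ↑A₁) (h₂ : Percolates G (r - 2) ↑A₂) :
    ∀ j, 0 < j → j < l - 1 →
      LayerInfected G (thetaGraph k l) r ↑(thetaSeed k l G r A₀ A₁ A₂) (thetaP k l j) ∧
      AllCrossInfected G (thetaGraph k l) r ↑(thetaSeed k l G r A₀ A₁ A₂) 1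
        (thetaP k l j) := by
  have hstart := (thetaSeed_allCrossInfected_hub₀ (k := k) (l := l) (A₁ := A₁) (A₂ := A₂)
    (by omega) h₀).mono one_le_two
  have hend :=
    thetaSeed_allCrossInfected_hub₁ (k := k) (l := l) (A₂ := A₂) (by omega) h₀ h₁
  rw [← thetaP_zero (k := k) (l := l)] at hstart
  rw [← thetaP_last (k := k) (l := l) (by omega)] at hend
  refine path_layers_infected (by omega) (thetaP_adj (by omega)) ?_ h₁ h₂ ?_ ?_ hstart hend ?_
  · rw [thetaP_last (by omega)]
    exact thetaP_ne_inl (by omega) (by omega) 1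
  · exact fun j hj hjm e he =>
      .init (layer₁_mem_thetaSeed (.inr (.inl ⟨j, mem_Ico.2 ⟨hj, by omega⟩, rfl⟩)) he)
  · exact fun e he => .init (layer₂_mem_thetaSeed (.inl rfl) he)
  · intro v hv
    rw [show l - 1 - 1 = l - 1 - 2 + 1 by omega]
    exact .init (fibre₂_mem_thetaSeed hv (thetaP_mem_thetaEdges (by simp; omega)))

theorem thetaSeed_thetaQ_layers_infected (hl : 4 ≤ l) (hkl : l ≤ k)
    (h₀ : Percolates G r ↑A₀)
    (h₁ : Percolates G (r - 1) ↑A₁) (h₂ : Percolates G (r - 2) ↑A₂) :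
    ∀ j, 0 < j → j < k - 1 →
      LayerInfected G (thetaGraph k l) r ↑(thetaSeed k l G r A₀ A₁ A₂) (thetaQ k l j) ∧
      AllCrossInfected G (thetaGraph k l) r ↑(thetaSeed k l G r A₀ A₁ A₂) 1
        (thetaQ k l j) := by
  have hstart := (thetaSeed_allCrossInfected_hub₀ (k := k) (l := l) (A₁ := A₁) (A₂ := A₂)
    (by omega) h₀).mono one_le_two
  have hend :=
    thetaSeed_allCrossInfected_hub₁ (k := k) (l := l) (A₂ := A₂) (by omega) h₀ h₁
  rw [← thetaQ_zero (k := k) (l := l)] at hstart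
  rw [← thetaQ_last (k := k) (l := l) (by omega)] at hend
  refine path_layers_infected (by omega) (thetaQ_adj (by omega)) ?_ h₁ h₂ ?_ ?_ hstart hend ?_
  · rw [thetaQ_last (by omega)]
    exact thetaQ_ne_inl (by omega) (by omega) 1
  · exact fun j hj hjm e he =>
      .init (layer₁_mem_thetaSeed (.inr (.inr ⟨j, mem_Ico.2 ⟨hj, by omega⟩, rfl⟩)) he)
  · exact fun e he => .init (layer₂_mem_thetaSeed (.inr rfl) he)
  · intro v hv
    rw [show k - 1 - 1 = k - 1 - 2 + 1 by omega]
    exact .init (fibre₂_mem_thetaSeed hv (thetaQ_mem_thetaEdges _ (by omega)))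

theorem thetaSeed_layers_infected (hl : 4 ≤ l) (hkl : l ≤ k) (h₀ : Percolates G r ↑A₀)
    (h₁ : Percolates G (r - 1) ↑A₁) (h₂ : Percolates G (r - 2) ↑A₂)
    (x : Fin 2 ⊕ Fin (l - 2) ⊕ Fin (k - 2)) :
    LayerInfected G (thetaGraph k l) r ↑(thetaSeed k l G r A₀ A₁ A₂) x ∧
      AllCrossInfected G (thetaGraph k l) r ↑(thetaSeed k l G r A₀ A₁ A₂) 1 x := by
  rcases x with i | i | i
  · fin_cases i
    · exact ⟨thetaSeed_layerInfected_hub₀ h₀,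
        (thetaSeed_allCrossInfected_hub₀ (by omega) h₀).mono one_le_two⟩
    · exact ⟨thetaSeed_layerInfected_hub₁ (by omega) h₀ h₁,
        (thetaSeed_allCrossInfected_hub₁ (by omega) h₀ h₁).mono one_le_two⟩
  · rw [← thetaP_succ i]
    exact thetaSeed_thetaP_layers_infected hl hkl h₀ h₁ h₂ _ (by omega) (by omega)
  · rw [← thetaQ_succ i]
    exact thetaSeed_thetaQ_layers_infected hl hkl h₀ h₁ h₂ _ (by omega) (by omega)

theorem thetaSeed_fibre_infected_of_degree_add_two (hl : 4 ≤ l) (hkl : l ≤ k)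
    (h₀ : Percolates G r ↑A₀)
    (h₁ : Percolates G (r - 1) ↑A₁) {v : V} (hv : G.degree v + 2 = r)
    {e : Sym2 _} (he : e ∈ (thetaGraph k l).edgeSet) :
    Infected (G □ thetaGraph k l) r ↑(thetaSeed k l G r A₀ A₁ A₂)
      (e.map (Prod.mk v)) := by
  rw [← coe_thetaEdges_range (by omega) (by omega), mem_coe] at he
  rcases mem_thetaEdges_range he with he | rfl | rfl
  · exact .init (fibre₂_mem_thetaSeed hv he)
  · have hadj := thetaP_adj (k := k) (l := l) (by omega) 0 (by omega)
    rw [thetaP_zero] at hadj ⊢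
    exact thetaSeed_allCrossInfected_hub₀ (k := k) (by omega) h₀ _ hadj v (by omega)
  · have hadj := thetaP_adj (k := k) (l := l) (by omega) (l - 2) (by omega)
    rw [show l - 2 + 1 = l - 1 by omega, thetaP_last (by omega)] at hadj
    rw [thetaP_last (by omega), Sym2.map_mk, Sym2.eq_swap]
    exact thetaSeed_allCrossInfected_hub₁ (k := k) (by omega) h₀ h₁ _ hadj.symm v (by omega)

theorem thetaSeed_percolates (hl : 4 ≤ l) (hkl : l ≤ k) (h₀ : Percolates G r ↑A₀)
    (h₁ : Percolates G (r - 1) ↑A₁) (h₂ : Percolates G (r - 2) ↑A₂) :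
    Percolates (G □ thetaGraph k l) r ↑(thetaSeed k l G r A₀ A₁ A₂) := by
  have hlayers := thetaSeed_layers_infected hl hkl h₀ h₁ h₂
  refine ⟨thetaSeed_subset_edgeSet (by omega) (by omega) h₀.1 h₁.1 h₂.1,
    forall_infected_of_layers_of_fibres (fun x => (hlayers x).1) fun v e he => ?_⟩
  rcases (by omega : r ≤ G.degree v + 1 ∨ G.degree v + 2 = r ∨ G.degree v + 3 ≤ r)
    with hv | hv | hv
  · induction e using Sym2.ind with
    | h x y => exact (hlayers x).2 y he v hv
  · exact thetaSeed_fibre_infected_of_degree_add_two hl hkl h₀ h₁ hv he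
  · rw [← coe_thetaEdges_range (by omega) (by omega), mem_coe] at he
    exact .init (fibre₃_mem_thetaSeed hv he)

end SeedPercolates

section Counting

variable {V : Type*} [Fintype V]

theorem card_thetaSeed_le {k l : ℕ} (G : SimpleGraph V) (r : ℕ)
    (A₀ A₁ A₂ : Finset (Sym2 V)) (hl : 4 ≤ l) (hkl : l ≤ k) :
    #(thetaSeed k l G r A₀ A₁ A₂) ≤ #A₀ + (k + l - 5) * #A₁ + 2 * #A₂ +
      #{v | G.degree v + 1 = r} + (k + l - 3) * #{v | G.degree v + 2 = r} +
      (k + l - 1) * #{v | G.degree v + 3 ≤ r} := by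
  have hL₁ : #(insert (Sum.inl 1) ((Ico 1 (l - 2)).image (thetaP k l) ∪
      (Ico 1 (k - 2)).image (thetaQ k l))) ≤ k + l - 5 := by
    grw [card_insert_le, card_union_le, card_image_le, card_image_le]
    simp only [Nat.card_Ico]
    omega
  have hE₂ : #(thetaEdges k l (Ico 1 (l - 2))) ≤ k + l - 3 :=
    (card_thetaEdges_le _).trans (by simp only [Nat.card_Ico]; omega)
  have hE₃ : #(thetaEdges k l (range (l - 1))) ≤ k + l - 1 :=
    (card_thetaEdges_le _).trans (by simp only [card_range]; omega)
  unfold thetaSeed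
  grw [card_union_le, card_union_le, card_union_le, card_union_le, card_union_le]
  gcongr ?_ + ?_ + ?_ + ?_ + ?_ + ?_
  · exact card_image_le
  · grw [card_biUnion_le_card_mul _ _ _ fun _ _ => card_image_le, hL₁]
  · grw [card_biUnion_le_card_mul _ _ _ fun _ _ => card_image_le, card_le_two]
  · exact card_image_le
  · grw [card_biUnion_le_card_mul _ _ _ fun _ _ => card_image_le.trans hE₂, mul_comm]
  · grw [card_biUnion_le_card_mul _ _ _ fun _ _ => card_image_le.trans hE₃, mul_comm]

theorem card_degree_add_eq (G : SimpleGraph V) (r i : ℕ) :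
    #{v | G.degree v + i = r} = dcount G ((r : ℤ) - i) := by
  rw [dcount, Nat.card_eq_fintype_card, Fintype.card_subtype]
  congr 1
  ext v
  simp only [mem_filter, mem_univ, true_and]
  omega

theorem card_degree_add_three_le (G : SimpleGraph V) (r : ℕ) :
    #{v | G.degree v + 3 ≤ r} = ∑ t ∈ range (r - 2), dcount G t := by
  rw [card_eq_sum_card_fiberwise (f := fun v => G.degree v) (t := range (r - 2))
    fun v hv => by simp at hv ⊢; omega]
  refine sum_congr rfl fun t ht => ?_
  rw [dcount, Nat.card_eq_fintype_card, Fintype.card_subtype]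
  congr 1
  ext v
  simp only [mem_range, mem_filter, mem_univ, true_and] at ht ⊢
  omega

end Counting

section MinimumPercolatingSet

variable {V : Type*} {G : SimpleGraph V} {r : ℕ}

theorem me_le_card {A : Finset (Sym2 V)} (hA : Percolates G r ↑A) : me G r ≤ #A :=
  Nat.sInf_le ⟨↑A, A.finite_toSet, hA, Set.ncard_coe_finset A⟩

theorem exists_percolates_card_eq_me [Finite V] (G : SimpleGraph V) (r : ℕ) :
    ∃ A : Finset (Sym2 V), Percolates G r ↑A ∧ #A = me G r := by
  obtain ⟨S, hSfin, hS, hcard⟩ : me G r ∈ {n | ∃ S : Set (Sym2 V), S.Finite ∧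
      Percolates G r S ∧ S.ncard = n} :=
    Nat.sInf_mem ⟨_, G.edgeSet, Set.toFinite _, ⟨subset_rfl, fun _ he => .init he⟩, rfl⟩
  refine ⟨hSfin.toFinset, by simpa using hS, ?_⟩
  rw [← hcard, ← Set.ncard_coe_finset, Set.Finite.coe_toFinset]

end MinimumPercolatingSet

theorem theta_upper_general {V : Type*} [Fintype V] (G : SimpleGraph V) (r k l : ℕ)
    (hl : 4 ≤ l) (hkl : l ≤ k) :
    me (G □ thetaGraph k l) r ≤
      me G r + (k + l - 5) * me G (r - 1) + 2 * me G (r - 2) +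
      dcount G ((r : ℤ) - 1) + (k + l - 3) * dcount G ((r : ℤ) - 2) +
      (k + l - 1) * ∑ t ∈ Finset.range (r - 2), dcount G (t : ℤ) := by
  obtain ⟨A₀, h₀, hA₀⟩ := exists_percolates_card_eq_me G r
  obtain ⟨A₁, h₁, hA₁⟩ := exists_percolates_card_eq_me G (r - 1)
  obtain ⟨A₂, h₂, hA₂⟩ := exists_percolates_card_eq_me G (r - 2)
  calc me (G □ thetaGraph k l) r
      ≤ #(thetaSeed k l G r A₀ A₁ A₂) :=
        me_le_card (thetaSeed_percolates hl hkl h₀ h₁ h₂)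
    _ ≤ _ := card_thetaSeed_le G r A₀ A₁ A₂ hl hkl
    _ = _ := by
      rw [hA₀, hA₁, hA₂, card_degree_add_eq, card_degree_add_eq, card_degree_add_three_le]
      push_cast
      rfl

/-- Upper bound on `m_e(G □ H_{k,ℓ}, r)` for the theta graph `H_{k,ℓ}`, `k ≥ ℓ ≥ 4`. -/
theorem theta_upper {V : Type*} [Fintype V] (G : SimpleGraph V) (r k l : ℕ)
    (hr : 1 < r) (hl : 4 ≤ l) (hkl : l ≤ k) :
    me (G □ thetaGraph k l) r ≤
      me G r + (k + l - 5) * me G (r - 1) + 2 * me G (r - 2) +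
      dcount G ((r : ℤ) - 1) + (k + l - 3) * dcount G ((r : ℤ) - 2) +
      (k + l - 1) * ∑ t ∈ Finset.range (r - 2), dcount G (t : ℤ) :=
  theta_upper_general G r k l hl hkl

end BondPerc
end

section
/- Recursive formula for star products: if there is a proper edge-colouring c of G with m_e(G,i) = dim(W^i_{G,c}) for i ∈ {r−1, r}, then m_e(G□S_k, r) = m_e(G,r) + k·m_e(G,r−1) + Σ_{t=1}^{k−1} t·d^G_{r−t} + k·Σ_{t=k}^{r} d^G_{r−t}. -/
open Polynomial

namespace BondPerc

open Classical

set_option maxHeartbeats 1000000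

/-!
The upper bound is a construction: a minimum `r`-percolating set `A` of `G` in the centre layer,
a minimum `(r - 1)`-percolating set `B` of `G` in every leaf layer, and `min (r - deg v) k` star
edges at every vertex `v`. The centre layer percolates first; then every star edge at `v` is
infected from `(v, 0)` by the `deg v` centre-layer edges and the seed star edges there; finally
each leaf layer percolates with threshold `r - 1`, its star edge giving every vertex one extra
infected edge.

For the lower bound, a proper colouring `c` gives `dim W^r_{G,c} ≤ m_e(G, r)`: evaluation on a
percolating set is injective, since every infection step at `v` supplies `p_v` with
`min r (deg v)` roots at distinct colours. Colouring the star edges with fresh colours `α j`,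
an explicit injection `W^r_{G,c} × (W^{r-1}_{G,c})^k × ∏_v ℝ[X]_{< min (r - deg v) k}` into
`W^r` of `G □ S_k` gives the matching bound when `m_e = dim W` at `r` and `r - 1`. Sorting the
vertices by degree turns `∑_v min (r - deg v) k` into the `d^G` terms.
-/

section Percolation

variable {V W : Type*}

theorem exists_percolates_ncard_eq_me [Fintype V] (G : SimpleGraph V) (r : ℕ) :
    ∃ S : Set (Sym2 V), S.Finite ∧ Percolates G r S ∧ S.ncard = me G r :=
  Nat.sInf_mem (s := {n | ∃ S : Set (Sym2 V), S.Finite ∧ Percolates G r S ∧ S.ncard = n})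
    ⟨_, G.edgeSet, Set.toFinite _, ⟨subset_rfl, fun _ he => .init he⟩, rfl⟩

theorem me_le_ncard {G : SimpleGraph V} {r : ℕ} {S : Set (Sym2 V)} (hS : S.Finite)
    (h : Percolates G r S) : me G r ≤ S.ncard :=
  Nat.sInf_le ⟨S, hS, h, rfl⟩

theorem Infected.map_embedding {G : SimpleGraph V} {H : SimpleGraph W} (f : G ↪g H)
    {q r s : ℕ} (hr : r ≤ q + s) {S : Set (Sym2 V)} {S' : Set (Sym2 W)}
    (hS : ∀ e ∈ S, e.map f ∈ S') (X : V → Finset (Sym2 W))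
    (hXcard : ∀ v, s ≤ (X v).card)
    (hX : ∀ v, ∀ x ∈ X v, x ∈ H.edgeSet ∧ f v ∈ x ∧ Infected H r S' x)
    (hXnew : ∀ v, ∀ x ∈ X v, ∀ e : Sym2 V, x ≠ e.map f)
    {e : Sym2 V} (he : Infected G q S e) : Infected H r S' (e.map f) := by
  induction he with
  | init he => exact .init (hS _ he)
  | step he v hv T hT hT1 hT2 _ ih =>
    have hdisj : Disjoint (T.image (Sym2.map f)) (X v) := by
      simp only [Finset.disjoint_left, Finset.mem_image]
      rintro _ ⟨g, -, rfl⟩ hx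
      exact hXnew v _ hx g rfl
    have hT' : ∀ x ∈ T.image (Sym2.map f) ∪ X v,
        x ∈ H.edgeSet ∧ f v ∈ x ∧ Infected H r S' x := by
      simp only [Finset.mem_union, Finset.mem_image]
      rintro _ (⟨g, hg, rfl⟩ | hx)
      · exact ⟨f.map_mem_edgeSet_iff.2 (hT1 g hg), Sym2.mem_map.2 ⟨v, hT2 g hg, rfl⟩,
          ih g hg⟩
      · exact hX v _ hx
    refine .step (f.map_mem_edgeSet_iff.2 he) (f v) (Sym2.mem_map.2 ⟨v, hv, rfl⟩) _ ?_
      (fun x hx => (hT' x hx).1) (fun x hx => (hT' x hx).2.1) (fun x hx => (hT' x hx).2.2)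
    rw [Finset.card_union_of_disjoint hdisj,
      Finset.card_image_of_injective _ (Sym2.map.injective f.injective)]
    have := hXcard v
    omega

end Percolation

section LowerBound

variable {V : Type*} [Fintype V] {G : SimpleGraph V} {r : ℕ} {c : Sym2 V → ℝ}
  {p : V → ℝ[X]}

theorem eval_eq_of_mem_Wspace (hp : p ∈ Wspace G r c) {e : Sym2 V} (he : e ∈ G.edgeSet)
    {u v : V} (hu : u ∈ e) (hv : v ∈ e) : (p u).eval (c e) = (p v).eval (c e) := by
  induction e with
  | _ a b =>
    rcases Sym2.mem_iff.1 hu with rfl | rfl <;> rcases Sym2.mem_iff.1 hv with rfl | rfl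
    exacts [rfl, hp.2 _ _ he, (hp.2 _ _ he).symm, rfl]

/-- The colours of distinct edges at `v` are distinct, so `p v` has at least `min r (deg v)`
roots but degree less than that. -/
theorem eq_zero_of_eval_eq_zero_of_incident (hc : IsProperEdgeColoring G c)
    (hp : p ∈ Wspace G r c) {v : V} {T : Finset (Sym2 V)} (hTG : ∀ e ∈ T, e ∈ G.edgeSet)
    (hTv : ∀ e ∈ T, v ∈ e) (hcard : min r (G.degree v) ≤ T.card)
    (hzero : ∀ e ∈ T, (p v).eval (c e) = 0) : p v = 0 := by
  by_contra hpv
  refine hpv (eq_zero_of_natDegree_lt_card_of_eval_eq_zero' (p v) (T.image c)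
    (by simpa using hzero) ?_)
  rw [Finset.card_image_of_injOn fun e he f hf hef => by_contra fun hne =>
    hc e (hTG e he) f (hTG f hf) hne ⟨v, hTv e he, hTv f hf⟩ hef]
  exact ((natDegree_lt_iff_degree_lt hpv).2 (hp.1 v)).trans_le hcard

theorem Infected.eval_eq_zero (hc : IsProperEdgeColoring G c) {S : Set (Sym2 V)}
    (hp : p ∈ Wspace G r c) (hS : ∀ e ∈ S, ∀ w ∈ e, (p w).eval (c e) = 0)
    {e : Sym2 V} (he : Infected G r S e) : ∀ w ∈ e, (p w).eval (c e) = 0 := by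
  induction he with
  | init he => exact hS _ he
  | step he v hv T hT hT1 hT2 _ ih =>
    intro w hw
    have hpv : p v = 0 := eq_zero_of_eval_eq_zero_of_incident hc hp hT1 hT2
      ((min_le_left _ _).trans hT) fun f hf => ih f hf v (hT2 f hf)
    rw [eval_eq_of_mem_Wspace hp he hw hv, hpv, eval_zero]

theorem eq_zero_of_percolates (hc : IsProperEdgeColoring G c) {S : Set (Sym2 V)}
    (hS : Percolates G r S) (hp : p ∈ Wspace G r c)
    (hzero : ∀ e ∈ S, ∀ w ∈ e, (p w).eval (c e) = 0) : p = 0 := by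
  funext v
  refine eq_zero_of_eval_eq_zero_of_incident hc hp (T := G.incidenceFinset v)
    (fun f hf => ((G.mem_incidenceFinset v f).1 hf).1)
    (fun f hf => ((G.mem_incidenceFinset v f).1 hf).2)
    (by rw [G.card_incidenceFinset_eq_degree]; exact min_le_right _ _) fun f hf => ?_
  have hf := (G.mem_incidenceFinset v f).1 hf
  exact Infected.eval_eq_zero hc hp hzero (hS.2 f hf.1) v hf.2

noncomputable def evalOn (G : SimpleGraph V) (r : ℕ) (c : Sym2 V → ℝ) (S : Set (Sym2 V)) :
    Wspace G r c →ₗ[ℝ] (S → ℝ) where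
  toFun p e := ((p : V → ℝ[X]) (e : Sym2 V).out.1).eval (c e)
  map_add' _ _ := by funext; simp
  map_smul' _ _ := by funext; simp

theorem Wdim_le_ncard (hc : IsProperEdgeColoring G c) {S : Set (Sym2 V)} (hfin : S.Finite)
    (hS : Percolates G r S) : Wdim G r c ≤ S.ncard := by
  have : Fintype S := hfin.fintype
  have hinj : Function.Injective (evalOn G r c S) := by
    refine (injective_iff_map_eq_zero _).2 fun p hp => Subtype.ext ?_
    refine eq_zero_of_percolates hc hS p.2 fun e he w hw => ?_
    rw [eval_eq_of_mem_Wspace p.2 (hS.1 he) hw (Sym2.out_fst_mem e)]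
    exact congrFun hp ⟨e, he⟩
  have := LinearMap.finrank_le_finrank_of_injective hinj
  rwa [Module.finrank_fintype_fun_eq_card, ← Nat.card_eq_fintype_card,
    Nat.card_coe_set_eq] at this

theorem Wdim_le_me (hc : IsProperEdgeColoring G c) : Wdim G r c ≤ me G r := by
  obtain ⟨S, hfin, hS, hcard⟩ := exists_percolates_ncard_eq_me G r
  exact hcard ▸ Wdim_le_ncard hc hfin hS

end LowerBound

section BoxStar

variable {V : Type*} {k : ℕ}

theorem starGraph_adj {i j : Fin (k + 1)} :
    (starGraph k).Adj i j ↔ i ≠ j ∧ (i = 0 ∨ j = 0) := by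
  simp [starGraph, SimpleGraph.fromRel_adj]

theorem starGraph_degree_zero [Fintype ((starGraph k).neighborSet 0)] :
    (starGraph k).degree 0 = k := by
  have : (starGraph k).neighborFinset 0 = Finset.univ.erase 0 := by
    ext j; simp [starGraph_adj, eq_comm]
  rw [← SimpleGraph.card_neighborFinset_eq_degree, this, Finset.card_erase_of_mem
    (Finset.mem_univ _), Finset.card_univ, Fintype.card_fin, Nat.add_sub_cancel]

theorem starGraph_degree_succ (j : Fin k) [Fintype ((starGraph k).neighborSet j.succ)] :
    (starGraph k).degree j.succ = 1 := by
  have : (starGraph k).neighborFinset j.succ = {0} := by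
    ext i
    simp only [SimpleGraph.mem_neighborFinset, starGraph_adj, Finset.mem_singleton]
    grind [Fin.succ_ne_zero]
  rw [← SimpleGraph.card_neighborFinset_eq_degree, this, Finset.card_singleton]

variable {G : SimpleGraph V}

theorem degree_boxProd_starGraph_zero (v : V) [Fintype (G.neighborSet v)]
    [Fintype ((G □ starGraph k).neighborSet (v, 0))] :
    (G □ starGraph k).degree (v, 0) = G.degree v + k := by
  classical
  rw [SimpleGraph.degree_boxProd, starGraph_degree_zero]

theorem degree_boxProd_starGraph_succ (v : V) (j : Fin k) [Fintype (G.neighborSet v)]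
    [Fintype ((G □ starGraph k).neighborSet (v, j.succ))] :
    (G □ starGraph k).degree (v, j.succ) = G.degree v + 1 := by
  classical
  rw [SimpleGraph.degree_boxProd, starGraph_degree_succ]

def layerEdge (i : Fin (k + 1)) (e : Sym2 V) : Sym2 (V × Fin (k + 1)) :=
  e.map (·, i)

def starEdge (v : V) (j : Fin k) : Sym2 (V × Fin (k + 1)) :=
  s((v, 0), (v, j.succ))

theorem mem_layerEdge {i : Fin (k + 1)} {e : Sym2 V} {x : V × Fin (k + 1)} :
    x ∈ layerEdge i e ↔ x.1 ∈ e ∧ x.2 = i := by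
  obtain ⟨v, i'⟩ := x
  simp only [layerEdge, Sym2.mem_map, Prod.mk.injEq]
  constructor
  · rintro ⟨w, hw, rfl, rfl⟩; exact ⟨hw, rfl⟩
  · rintro ⟨hv, rfl⟩; exact ⟨v, hv, rfl, rfl⟩

theorem layerEdge_mem_edgeSet {i : Fin (k + 1)} {e : Sym2 V} :
    layerEdge i e ∈ (G □ starGraph k).edgeSet ↔ e ∈ G.edgeSet :=
  (G.boxProdLeft (starGraph k) i).map_mem_edgeSet_iff

theorem starEdge_mem_edgeSet (v : V) (j : Fin k) :
    starEdge v j ∈ (G □ starGraph k).edgeSet :=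
  Or.inr ⟨starGraph_adj.2 ⟨(Fin.succ_ne_zero j).symm, Or.inl rfl⟩, rfl⟩

theorem layerEdge_injective : Function.Injective2 (layerEdge (V := V) (k := k)) := by
  intro i i' e e' h
  have hi : (e.out.1, i) ∈ layerEdge i' e' := h ▸ mem_layerEdge.2 ⟨Sym2.out_fst_mem e, rfl⟩
  obtain rfl := (mem_layerEdge.1 hi).2
  exact ⟨rfl, Sym2.map.injective (fun _ _ h => congrArg Prod.fst h) h⟩

theorem starEdge_injective : Function.Injective2 (starEdge (V := V) (k := k)) := by
  intro v w j l h
  simpa [starEdge, Sym2.eq_iff, Fin.succ_ne_zero, (Fin.succ_ne_zero _).symm] using h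

theorem starEdge_ne_layerEdge (v : V) (j : Fin k) (i : Fin (k + 1)) (e : Sym2 V) :
    starEdge v j ≠ layerEdge i e := by
  intro h
  have h0 := (mem_layerEdge.1 (h ▸ Sym2.mem_mk_left _ _ : (v, 0) ∈ layerEdge i e)).2
  have h1 := (mem_layerEdge.1 (h ▸ Sym2.mem_mk_right _ _ : (v, j.succ) ∈ layerEdge i e)).2
  exact Fin.succ_ne_zero j (h1.trans h0.symm)

theorem layerEdge_or_starEdge_of_mem_edgeSet {e : Sym2 (V × Fin (k + 1))}
    (he : e ∈ (G □ starGraph k).edgeSet) :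
    (∃ i, ∃ e' ∈ G.edgeSet, e = layerEdge i e') ∨ ∃ v j, e = starEdge v j := by
  induction e with
  | _ x y =>
    obtain ⟨u, i⟩ := x
    obtain ⟨v, j⟩ := y
    rcases SimpleGraph.boxProd_adj.1 he with ⟨hG, rfl : i = j⟩ | ⟨hS, rfl : u = v⟩
    · exact Or.inl ⟨i, s(u, v), hG, rfl⟩
    · obtain ⟨hij, rfl | rfl⟩ := starGraph_adj.1 hS
      · obtain ⟨j, rfl⟩ := Fin.exists_succ_eq.2 hij.symm
        exact Or.inr ⟨u, j, rfl⟩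
      · obtain ⟨i, rfl⟩ := Fin.exists_succ_eq.2 hij
        exact Or.inr ⟨u, i, Sym2.eq_swap⟩

def seedEdge : (Σ _ : Fin (k + 1), Sym2 V) ⊕ (Σ _ : V, Fin k) → Sym2 (V × Fin (k + 1))
  | .inl ⟨i, e⟩ => layerEdge i e
  | .inr ⟨v, j⟩ => starEdge v j

theorem seedEdge_injective : Function.Injective (seedEdge (V := V) (k := k)) := by
  rintro (⟨i, e⟩ | ⟨v, j⟩) (⟨i', e'⟩ | ⟨v', j'⟩) h <;> simp only [seedEdge] at h
  · obtain ⟨rfl, rfl⟩ := layerEdge_injective h; rfl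
  · exact absurd h.symm (starEdge_ne_layerEdge _ _ _ _)
  · exact absurd h (starEdge_ne_layerEdge _ _ _ _)
  · obtain ⟨rfl, rfl⟩ := starEdge_injective h; rfl

end BoxStar

section UpperBound

variable {V : Type*} [Fintype V] (G : SimpleGraph V) (r k : ℕ)

noncomputable def seedLeaves (v : V) : Finset (Fin k) :=
  Finset.univ.filter fun j => j.val < r - G.degree v

theorem card_seedLeaves (v : V) : (seedLeaves G r k v).card = min (r - G.degree v) k := by
  rw [seedLeaves, Fin.card_filter_val_lt, min_comm]

/-- `A` in the centre layer, `B` in every leaf layer, and `min (r - deg v) k` star edges at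
every vertex `v`. -/
noncomputable def seedSet (A B : Finset (Sym2 V)) : Finset (Sym2 (V × Fin (k + 1))) :=
  ((Finset.univ.sigma (Fin.cases (motive := fun _ => Finset (Sym2 V)) A fun _ => B)).disjSum
    (Finset.univ.sigma (seedLeaves G r k))).image seedEdge

variable {G r k} {A B : Finset (Sym2 V)}

theorem card_seedSet :
    (seedSet G r k A B).card = A.card + k * B.card + ∑ v, min (r - G.degree v) k := by
  simp only [seedSet, Finset.card_image_of_injective _ seedEdge_injective,
    Finset.card_disjSum, Finset.card_sigma, Fin.sum_univ_succ, Fin.cases_zero, Fin.cases_succ,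
    Finset.sum_const, Finset.card_univ, Fintype.card_fin, smul_eq_mul, card_seedLeaves]

theorem layerEdge_zero_mem_seedSet {e : Sym2 V} (he : e ∈ A) :
    layerEdge 0 e ∈ seedSet G r k A B :=
  Finset.mem_image.2 ⟨.inl ⟨0, e⟩, by simpa using he, rfl⟩

theorem layerEdge_succ_mem_seedSet {e : Sym2 V} (he : e ∈ B) (j : Fin k) :
    layerEdge j.succ e ∈ seedSet G r k A B :=
  Finset.mem_image.2 ⟨.inl ⟨j.succ, e⟩, by simpa using he, rfl⟩

theorem starEdge_mem_seedSet {v : V} {j : Fin k} (hj : j ∈ seedLeaves G r k v) :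
    starEdge v j ∈ seedSet G r k A B :=
  Finset.mem_image.2 ⟨.inr ⟨v, j⟩, by simpa using hj, rfl⟩

theorem seedSet_subset_edgeSet (hA : ↑A ⊆ G.edgeSet) (hB : ↑B ⊆ G.edgeSet) :
    ↑(seedSet G r k A B) ⊆ (G □ starGraph k).edgeSet := by
  intro e he
  obtain ⟨(⟨i, e⟩ | ⟨v, j⟩), hmem, rfl⟩ := Finset.mem_image.1 he
  · refine layerEdge_mem_edgeSet.2 ?_
    rcases Fin.eq_zero_or_eq_succ i with rfl | ⟨j, rfl⟩
    · exact hA (by simpa using hmem)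
    · exact hB (by simpa using hmem)
  · exact starEdge_mem_edgeSet v j

theorem infected_layerEdge_zero (hA : Percolates G r ↑A) {e : Sym2 V} (he : e ∈ G.edgeSet) :
    Infected (G □ starGraph k) r ↑(seedSet G r k A B) (layerEdge 0 e) :=
  Infected.map_embedding (G.boxProdLeft (starGraph k) 0) (s := 0) le_rfl
    (fun _ he => layerEdge_zero_mem_seedSet he) (fun _ => ∅) (fun _ => le_rfl)
    (fun _ _ h => absurd h (Finset.notMem_empty _))
    (fun _ _ h => absurd h (Finset.notMem_empty _)) (hA.2 e he)

/-- A star edge that is not a seed sees, at its centre end, the `deg v` edges of the centre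
layer and the `r - deg v` seed star edges. -/
theorem infected_starEdge (hA : Percolates G r ↑A) (v : V) (j : Fin k) :
    Infected (G □ starGraph k) r ↑(seedSet G r k A B) (starEdge v j) := by
  by_cases hj : j ∈ seedLeaves G r k v
  · exact .init (starEdge_mem_seedSet hj)
  have hdisj : Disjoint ((G.incidenceFinset v).image (layerEdge 0))
      ((seedLeaves G r k v).image (starEdge v)) := by
    simp only [Finset.disjoint_left, Finset.mem_image]
    rintro _ ⟨e, -, rfl⟩ ⟨l, -, hl⟩
    exact starEdge_ne_layerEdge v l 0 e hl
  have hT : ∀ x ∈ (G.incidenceFinset v).image (layerEdge 0) ∪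
      (seedLeaves G r k v).image (starEdge v), x ∈ (G □ starGraph k).edgeSet ∧
        (v, 0) ∈ x ∧ Infected (G □ starGraph k) r ↑(seedSet G r k A B) x := by
    simp only [Finset.mem_union, Finset.mem_image, SimpleGraph.mem_incidenceFinset]
    rintro _ (⟨e, ⟨he, hv⟩, rfl⟩ | ⟨l, hl, rfl⟩)
    · exact ⟨layerEdge_mem_edgeSet.2 he, mem_layerEdge.2 ⟨hv, rfl⟩,
        infected_layerEdge_zero hA he⟩
    · exact ⟨starEdge_mem_edgeSet v l, Sym2.mem_mk_left _ _, .init (starEdge_mem_seedSet hl)⟩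
  refine .step (starEdge_mem_edgeSet v j) (v, 0) (Sym2.mem_mk_left _ _) _ ?_
    (fun x hx => (hT x hx).1) (fun x hx => (hT x hx).2.1) (fun x hx => (hT x hx).2.2)
  rw [Finset.card_union_of_disjoint hdisj,
    Finset.card_image_of_injective _ (layerEdge_injective.right 0),
    Finset.card_image_of_injective _ (starEdge_injective.right v),
    G.card_incidenceFinset_eq_degree, card_seedLeaves]
  simp only [seedLeaves, Finset.mem_filter, Finset.mem_univ, true_and, not_lt] at hj
  omega

theorem infected_layerEdge_succ (hA : Percolates G r ↑A) (hB : Percolates G (r - 1) ↑B)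
    (j : Fin k) {e : Sym2 V} (he : e ∈ G.edgeSet) :
    Infected (G □ starGraph k) r ↑(seedSet G r k A B) (layerEdge j.succ e) :=
  Infected.map_embedding (G.boxProdLeft (starGraph k) j.succ) (s := 1) (by omega)
    (fun _ he => layerEdge_succ_mem_seedSet he j) (fun v => {starEdge v j}) (fun _ => le_rfl)
    (fun v _ hx => Finset.mem_singleton.1 hx ▸
      ⟨starEdge_mem_edgeSet v j, Sym2.mem_mk_right _ _, infected_starEdge hA v j⟩)
    (fun v _ hx e => Finset.mem_singleton.1 hx ▸ starEdge_ne_layerEdge v j j.succ e) (hB.2 e he)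

theorem seedSet_percolates (hA : Percolates G r ↑A) (hB : Percolates G (r - 1) ↑B) :
    Percolates (G □ starGraph k) r ↑(seedSet G r k A B) := by
  refine ⟨seedSet_subset_edgeSet hA.1 hB.1, fun e he => ?_⟩
  obtain ⟨i, e, heG, rfl⟩ | ⟨v, j, rfl⟩ := layerEdge_or_starEdge_of_mem_edgeSet he
  · induction i using Fin.cases
    exacts [infected_layerEdge_zero hA heG, infected_layerEdge_succ hA hB _ heG]
  · exact infected_starEdge hA v j

theorem me_boxProd_starGraph_le :
    me (G □ starGraph k) r ≤ me G r + k * me G (r - 1) + ∑ v, min (r - G.degree v) k := by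
  obtain ⟨SA, hSA, hA, hcardA⟩ := exists_percolates_ncard_eq_me G r
  obtain ⟨SB, hSB, hB, hcardB⟩ := exists_percolates_ncard_eq_me G (r - 1)
  rw [← hSA.coe_toFinset] at hA hcardA
  rw [← hSB.coe_toFinset] at hB hcardB
  have := me_le_ncard (Finset.finite_toSet _) (seedSet_percolates (k := k) hA hB)
  rwa [Set.ncard_coe_finset, card_seedSet, ← Set.ncard_coe_finset, ← Set.ncard_coe_finset,
    hcardA, hcardB] at this

end UpperBound

section BoxColouring

variable {V : Type*} {k : ℕ}

/-- On a star edge one endpoint lies in the centre layer `0`, so `x.2 ⊔ y.2` is the leaf. -/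
noncomputable def boxColouring (c : Sym2 V → ℝ) (α : Fin (k + 1) → ℝ) :
    Sym2 (V × Fin (k + 1)) → ℝ :=
  Sym2.lift ⟨fun x y => if x.2 = y.2 then c s(x.1, y.1) else α (x.2 ⊔ y.2), fun x y => by
    by_cases h : x.2 = y.2
    · simp [h, Sym2.eq_swap]
    · simp [h, Ne.symm h, sup_comm]⟩

variable (c : Sym2 V → ℝ) (α : Fin (k + 1) → ℝ)

theorem boxColouring_layerEdge (i : Fin (k + 1)) (e : Sym2 V) :
    boxColouring c α (layerEdge i e) = c e := by
  induction e with
  | _ u v => simp [boxColouring, layerEdge]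

theorem boxColouring_starEdge (v : V) (j : Fin k) :
    boxColouring c α (starEdge v j) = α j.succ := by
  simp [boxColouring, starEdge, (Fin.succ_ne_zero j).symm]

theorem IsProperEdgeColoring.boxProd_starGraph {G : SimpleGraph V} {c : Sym2 V → ℝ}
    (hc : IsProperEdgeColoring G c) {α : Fin (k + 1) → ℝ} (hα : Function.Injective α)
    (hαc : ∀ i, α i ∉ Set.range c) :
    IsProperEdgeColoring (G □ starGraph k) (boxColouring c α) := by
  rintro e he f hf hef ⟨x, hxe, hxf⟩
  rcases layerEdge_or_starEdge_of_mem_edgeSet he with ⟨i, e, heG, rfl⟩ | ⟨v, j, rfl⟩ <;>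
    rcases layerEdge_or_starEdge_of_mem_edgeSet hf with
      ⟨i', f, hfG, rfl⟩ | ⟨v', j', rfl⟩ <;>
    simp only [boxColouring_layerEdge, boxColouring_starEdge]
  · obtain ⟨hxe', rfl⟩ := mem_layerEdge.1 hxe
    obtain ⟨hxf', hi⟩ := mem_layerEdge.1 hxf
    exact hc e heG f hfG (fun h => hef (h ▸ hi ▸ rfl)) ⟨x.1, hxe', hxf'⟩
  · exact fun h => hαc _ ⟨e, h⟩
  · exact fun h => hαc _ ⟨f, h.symm⟩
  · intro h
    obtain rfl := Fin.succ_injective _ (hα h)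
    have hv : x.1 = v := by rcases Sym2.mem_iff.1 hxe with rfl | rfl <;> rfl
    have hv' : x.1 = v' := by rcases Sym2.mem_iff.1 hxf with rfl | rfl <;> rfl
    exact hef (hv ▸ hv' ▸ rfl)

theorem exists_injective_forall_notMem_range [Finite V] (c : Sym2 V → ℝ) (n : ℕ) :
    ∃ α : Fin n → ℝ, Function.Injective α ∧ ∀ i, α i ∉ Set.range c := by
  have : Infinite ((Set.range c)ᶜ : Set ℝ) := (Set.finite_range c).infinite_compl.to_subtype
  let α : Fin n ↪ ((Set.range c)ᶜ : Set ℝ) :=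
    Fin.valEmbedding.trans (Infinite.natEmbedding _)
  exact ⟨fun i => α i, fun i j h => α.injective (Subtype.ext h), fun i => (α i).2⟩

end BoxColouring

section Polynomials

variable {R : Type*}

theorem finrank_degreeLT [CommRing R] [Nontrivial R] (n : ℕ) :
    Module.finrank R (degreeLT R n) = n := by
  rw [Module.finrank_eq_card_basis (degreeLT.basis R n), Fintype.card_fin]

theorem mul_mem_degreeLT [Semiring R] {p q : R[X]} {a b n : ℕ} (hp : p.natDegree ≤ a)
    (hq : q ∈ degreeLT R b) (hn : 0 < b → a + b ≤ n) : p * q ∈ degreeLT R n := by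
  by_cases hq0 : q = 0
  · simp [hq0]
  have hqb := (natDegree_lt_iff_degree_lt hq0).2 (mem_degreeLT.1 hq)
  refine mem_degreeLT.2 (degree_le_natDegree.trans_lt ?_)
  exact_mod_cast natDegree_mul_le.trans_lt (by omega)

theorem eq_zero_of_add_mul_eq_zero [Ring R] {m q g : R[X]} (hm : m.Monic)
    (hq : q.degree < m.degree) (h : q + m * g = 0) : q = 0 ∧ g = 0 := by
  obtain ⟨hg, hq⟩ := div_modByMonic_unique g q hm ⟨h, hq⟩
  rw [zero_divByMonic] at hg
  rw [zero_modByMonic] at hq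
  exact ⟨hq.symm, hg.symm⟩

end Polynomials

section LiftDomain

variable {V : Type*} [Fintype V] (G : SimpleGraph V) {r k : ℕ} (c : Sym2 V → ℝ)

instance : FiniteDimensional ℝ (Wspace G r c) := by
  let f : Wspace G r c →ₗ[ℝ] V → degreeLT ℝ r := LinearMap.pi fun v =>
    ((LinearMap.proj v).comp (Wspace G r c).subtype).codRestrict _ fun p =>
      mem_degreeLT.2 ((p.2.1 v).trans_le (by exact_mod_cast min_le_left _ _))
  exact Module.Finite.of_injective f fun p q h =>
    Subtype.ext (funext fun v => congrArg Subtype.val (congrFun h v))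

noncomputable def vanishingPoly (v : V) : ℝ[X] :=
  ∏ u ∈ G.neighborFinset v, (X - C (c s(v, u)))

theorem vanishingPoly_monic (v : V) : (vanishingPoly G c v).Monic :=
  monic_prod_of_monic _ _ fun _ _ => monic_X_sub_C _

theorem natDegree_vanishingPoly (v : V) : (vanishingPoly G c v).natDegree = G.degree v := by
  rw [vanishingPoly, natDegree_prod_of_monic _ _ fun _ _ => monic_X_sub_C _]
  simp

theorem eval_vanishingPoly {G} {u v : V} (h : G.Adj u v) :
    (vanishingPoly G c u).eval (c s(u, v)) = 0 := by
  rw [vanishingPoly, eval_prod]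
  exact Finset.prod_eq_zero ((G.mem_neighborFinset u v).2 h) (by simp)

variable (r k) in
abbrev LiftDomain : Type _ :=
  Wspace G r c × (Fin k → Wspace G (r - 1) c) ×
    ((v : V) → degreeLT ℝ (min (r - G.degree v) k))

theorem finrank_liftDomain : Module.finrank ℝ (LiftDomain G r k c) =
    Wdim G r c + k * Wdim G (r - 1) c + ∑ v, min (r - G.degree v) k := by
  simp only [Module.finrank_prod, Module.finrank_pi_fintype, finrank_degreeLT,
    Finset.sum_const, Finset.card_univ, Fintype.card_fin, smul_eq_mul, Wdim, add_assoc]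

variable {G c} (α : Fin (k + 1) → ℝ)

/-- For `p = (q, b, g)` and `m = vanishingPoly G c`: `m v` vanishes at the colours of the layer
edges at `v`, and both ends of the star edge from `v` to leaf `j` evaluate to
`q v (α j) + m v (α j) * g v (α j)`. -/
noncomputable def boxLift : LiftDomain G r k c →ₗ[ℝ] V × Fin (k + 1) → ℝ[X] where
  toFun p x := (p.1 : V → ℝ[X]) x.1 + Fin.cases (vanishingPoly G c x.1 * p.2.2 x.1)
    (fun j => (X - C (α j.succ)) * (p.2.1 j : V → ℝ[X]) x.1 +
      vanishingPoly G c x.1 * C ((p.2.2 x.1 : ℝ[X]).eval (α j.succ))) x.2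
  map_add' p p' := by
    funext ⟨v, i⟩
    cases i using Fin.cases <;> simp <;> ring
  map_smul' a p := by
    funext ⟨v, i⟩
    cases i using Fin.cases <;> simp [smul_eq_C_mul] <;> ring

theorem boxLift_apply_zero (p : LiftDomain G r k c) (v : V) :
    boxLift α p (v, 0) = (p.1 : V → ℝ[X]) v + vanishingPoly G c v * p.2.2 v := rfl

theorem boxLift_apply_succ (p : LiftDomain G r k c) (v : V) (j : Fin k) :
    boxLift α p (v, j.succ) =
      (p.1 : V → ℝ[X]) v + (X - C (α j.succ)) * (p.2.1 j : V → ℝ[X]) v +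
      vanishingPoly G c v * C ((p.2.2 v : ℝ[X]).eval (α j.succ)) := by
  rw [add_assoc]; rfl

end LiftDomain

section LiftMap

variable {V : Type*} [Fintype V] {G : SimpleGraph V} {r k : ℕ} {c : Sym2 V → ℝ}
  (α : Fin (k + 1) → ℝ)

/-- On the centre layer `q + m g = 0` with `deg q < deg m` forces `q = g = 0`; the leaf
layers then give `(X - α j) b_j = 0`. -/
theorem boxLift_injective : Function.Injective (boxLift (G := G) (r := r) (c := c) α) := by
  refine (injective_iff_map_eq_zero _).2 fun ⟨q, b, g⟩ h => ?_
  have hcentre (v : V) : (q : V → ℝ[X]) v = 0 ∧ (g v : ℝ[X]) = 0 := by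
    refine eq_zero_of_add_mul_eq_zero (vanishingPoly_monic G c v) ?_
      (by simpa [boxLift_apply_zero] using congrFun h (v, 0))
    rw [degree_eq_natDegree (vanishingPoly_monic G c v).ne_zero, natDegree_vanishingPoly]
    exact (q.2.1 v).trans_le (by exact_mod_cast min_le_right _ _)
  have hleaf (j : Fin k) (v : V) : (b j : V → ℝ[X]) v = 0 := by
    have := congrFun h (v, j.succ)
    simp only [boxLift_apply_succ, (hcentre v).1, (hcentre v).2, Pi.zero_apply] at this
    simpa [X_sub_C_ne_zero] using this
  simp only [Prod.mk_eq_zero]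
  exact ⟨Subtype.ext (funext fun v => (hcentre v).1),
    funext fun j => Subtype.ext (funext (hleaf j)),
    funext fun v => Subtype.ext (hcentre v).2⟩

theorem mem_degreeLT_of_mem_Wspace {p : V → ℝ[X]} (hp : p ∈ Wspace G r c) {n : ℕ} (v : V)
    (hn : min r (G.degree v) ≤ n) : p v ∈ degreeLT ℝ n :=
  mem_degreeLT.2 ((hp.1 v).trans_le (by exact_mod_cast hn))

theorem boxLift_mem_degreeLT_zero (p : LiftDomain G r k c) (v : V) :
    boxLift α p (v, 0) ∈ degreeLT ℝ (min r (G.degree v + k)) := by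
  rw [boxLift_apply_zero]
  refine add_mem (mem_degreeLT_of_mem_Wspace p.1.2 v (by omega)) ?_
  exact mul_mem_degreeLT (natDegree_vanishingPoly G c v).le (p.2.2 v).2 (by omega)

theorem boxLift_mem_degreeLT_succ (p : LiftDomain G r k c) (v : V) (j : Fin k) :
    boxLift α p (v, j.succ) ∈ degreeLT ℝ (min r (G.degree v + 1)) := by
  rw [boxLift_apply_succ]
  refine add_mem (add_mem (mem_degreeLT_of_mem_Wspace p.1.2 v (by omega)) ?_) ?_
  · exact mul_mem_degreeLT (natDegree_X_sub_C _).le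
      (mem_degreeLT_of_mem_Wspace (p.2.1 j).2 v le_rfl) (by omega)
  · by_cases hg : (p.2.2 v : ℝ[X]) = 0
    · simp [hg]
    have := (natDegree_lt_iff_degree_lt hg).2 (mem_degreeLT.1 (p.2.2 v).2)
    exact mul_mem_degreeLT (natDegree_vanishingPoly G c v).le
      (mem_degreeLT.2 (degree_C_le.trans_lt (by exact_mod_cast zero_lt_one))) (by omega)

theorem boxLift_eval_layerEdge (p : LiftDomain G r k c) {u v : V} (h : G.Adj u v)
    (i : Fin (k + 1)) : (boxLift α p (u, i)).eval (c s(u, v)) =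
      (boxLift α p (v, i)).eval (c s(u, v)) := by
  have hu := eval_vanishingPoly c h
  have hv := eval_vanishingPoly c h.symm
  rw [Sym2.eq_swap] at hv
  cases i using Fin.cases <;>
    simp [boxLift_apply_zero, boxLift_apply_succ, hu, hv, p.1.2.2 u v h, (p.2.1 _).2.2 u v h]

theorem boxLift_eval_starEdge (p : LiftDomain G r k c) (v : V) (j : Fin k) :
    (boxLift α p (v, 0)).eval (α j.succ) = (boxLift α p (v, j.succ)).eval (α j.succ) := by
  simp [boxLift_apply_zero, boxLift_apply_succ, mul_comm]

theorem boxLift_mem (p : LiftDomain G r k c) :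
    boxLift α p ∈ Wspace (G □ starGraph k) r (boxColouring c α) := by
  refine ⟨fun ⟨v, i⟩ => mem_degreeLT.1 ?_, ?_⟩
  · cases i using Fin.cases
    · rw [degree_boxProd_starGraph_zero]; exact boxLift_mem_degreeLT_zero α p v
    · rw [degree_boxProd_starGraph_succ]; exact boxLift_mem_degreeLT_succ α p v _
  rintro ⟨u, i⟩ ⟨v, j⟩ hadj
  rcases SimpleGraph.boxProd_adj.1 hadj with ⟨hG, rfl : i = j⟩ | ⟨hS, rfl : u = v⟩
  · rw [show s((u, i), (v, i)) = layerEdge i s(u, v) from rfl, boxColouring_layerEdge]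
    exact boxLift_eval_layerEdge α p hG i
  obtain ⟨hij, rfl | rfl⟩ := starGraph_adj.1 hS
  · obtain ⟨j, rfl⟩ := Fin.exists_succ_eq.2 hij.symm
    rw [show s((u, 0), (u, j.succ)) = starEdge u j from rfl, boxColouring_starEdge]
    exact boxLift_eval_starEdge α p u j
  · obtain ⟨i, rfl⟩ := Fin.exists_succ_eq.2 hij
    rw [Sym2.eq_swap, show s((u, 0), (u, i.succ)) = starEdge u i from rfl, boxColouring_starEdge]
    exact (boxLift_eval_starEdge α p u i).symm

theorem le_Wdim_boxProd_starGraph : Wdim G r c + k * Wdim G (r - 1) c +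
    ∑ v, min (r - G.degree v) k ≤ Wdim (G □ starGraph k) r (boxColouring c α) := by
  rw [← finrank_liftDomain]
  exact LinearMap.finrank_le_finrank_of_injective (f := (boxLift α).codRestrict _ (boxLift_mem α))
    fun p q h => boxLift_injective α (congrArg Subtype.val h)

end LiftMap

section Counting

variable {V : Type*} [Fintype V] (G : SimpleGraph V) (r : ℕ)

theorem dcount_eq_card (i : ℤ) :
    dcount G i = (Finset.univ.filter fun v => (G.degree v : ℤ) = i).card := by
  rw [dcount, Nat.card_eq_fintype_card, Fintype.card_subtype]

theorem sum_mul_dcount (s : Finset ℕ) (f : ℕ → ℕ) :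
    ∑ t ∈ s, f t * dcount G ((r : ℤ) - t) =
      ∑ v, if G.degree v ≤ r ∧ r - G.degree v ∈ s then f (r - G.degree v) else 0 := by
  simp only [dcount_eq_card, Finset.card_eq_sum_ones, Finset.mul_sum, Finset.sum_filter,
    mul_ite, mul_one, mul_zero]
  rw [Finset.sum_comm]
  refine Finset.sum_congr rfl fun v _ => ?_
  by_cases hv : G.degree v ≤ r
  · simp only [hv, true_and, ← Finset.sum_ite_eq' s (r - G.degree v) f]
    exact Finset.sum_congr rfl fun t _ => if_congr (by omega) rfl rfl
  · simp only [hv, false_and, if_false]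
    exact Finset.sum_eq_zero fun t _ => if_neg (by omega)

theorem sum_min_sub_degree (k : ℕ) :
    ∑ v, min (r - G.degree v) k =
      (∑ t ∈ Finset.Icc 1 (k - 1), t * dcount G ((r : ℤ) - t)) +
      k * ∑ t ∈ Finset.Icc k r, dcount G ((r : ℤ) - t) := by
  rw [Finset.mul_sum, sum_mul_dcount, sum_mul_dcount G r _ fun _ => k, ← Finset.sum_add_distrib]
  refine Finset.sum_congr rfl fun v _ => ?_
  simp only [Finset.mem_Icc]
  split_ifs <;> omega

end Counting

theorem star_recursion_general {V : Type*} [Fintype V] (G : SimpleGraph V) (r k : ℕ)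
    (c : Sym2 V → ℝ) (hc : IsProperEdgeColoring G c)
    (hmer : me G r = Wdim G r c) (hmer1 : me G (r - 1) = Wdim G (r - 1) c) :
    me (G □ starGraph k) r =
      me G r + k * me G (r - 1) +
      (∑ t ∈ Finset.Icc 1 (k - 1), t * dcount G ((r : ℤ) - t)) +
      k * ∑ t ∈ Finset.Icc k r, dcount G ((r : ℤ) - t) := by
  obtain ⟨α, hα, hαc⟩ := exists_injective_forall_notMem_range c (k + 1)
  have hlower : me G r + k * me G (r - 1) + ∑ v, min (r - G.degree v) k ≤
      me (G □ starGraph k) r := by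
    rw [hmer, hmer1]
    exact (le_Wdim_boxProd_starGraph α).trans (Wdim_le_me (hc.boxProd_starGraph hα hαc))
  rw [le_antisymm me_boxProd_starGraph_le hlower, sum_min_sub_degree]
  ring

/-- Recursive formula for `m_e(G □ S_k, r)`. -/
theorem star_recursion {V : Type*} [Fintype V] (G : SimpleGraph V) (r k : ℕ)
    (hr : 1 ≤ r) (hk : 1 ≤ k) (c : Sym2 V → ℝ) (hc : IsProperEdgeColoring G c)
    (hmer : me G r = Wdim G r c) (hmer1 : me G (r - 1) = Wdim G (r - 1) c) :
    me (G □ starGraph k) r =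
      me G r + k * me G (r - 1) +
      (∑ t ∈ Finset.Icc 1 (k - 1), t * dcount G ((r : ℤ) - t)) +
      k * ∑ t ∈ Finset.Icc k r, dcount G ((r : ℤ) - t) :=
  star_recursion_general G r k c hc hmer hmer1

end BondPerc
end
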